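/- arXiv:2501.03083 — 5 statements merged into one kernel-verified Lean document; each statement's English description precedes it below -/
import Mathlib

section
/- Let d ≥ 1, m > 0, κ > 0, C > 0, and set α = d/(m d + 2), β = α/d, k = m α/(2 κ d). For every t > 0 and every x ∈ ℝ^d with C − k‖x‖² t^{−2β} > 0, the Barenblatt–Pattle function u_BP satisfies the Porous Medium Equation classically at (x,t): the time derivative ∂u_BP/∂t (x,t) equals κ times the spatial divergence of u_BP^m ∇_x u_BP evaluated at (x,t); equivalently, ∂u_BP/∂t (x,t) = (κ/(m+1)) Δ_x (u_BP^{m+1})(x,t), where Δ_x is the Laplacian in the space variable. -/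
/-
On the region where `g = C - k t^(-2β) ‖x‖²` is positive, `u = t^(-α) g^(1/m)`, so both
`u^m ∇u` and `∇(u^(m+1)) = (m+1) u^m ∇u` are constant multiples of `g^(1/m) x`, whose divergence
is explicit. The equation then reduces to an identity between coefficients, which holds because
the exponents satisfy `α m + 2β = 1` (so `(t^(-α))^m t^(-2β) = t⁻¹`: the scaling of the equation)
and `2κk/m = β`.
-/

/-- The Barenblatt–Pattle function, with parameters `α`, `β`, `k` given explicitly. -/
noncomputable def uBP (d : ℕ) (m C α β k : ℝ)
    (x : EuclideanSpace ℝ (Fin d)) (t : ℝ) : ℝ :=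
  t ^ (-α) * (max (C - k * ‖x‖ ^ 2 * t ^ (-(2 * β))) 0) ^ (1 / m)

open Real Filter Topology

section NormSq

variable {E : Type*} [NormedAddCommGroup E]

theorem eventually_pos_sub_mul_norm_sq {c b : ℝ} {x : E} (hx : 0 < c - b * ‖x‖ ^ 2) :
    ∀ᶠ y in 𝓝 x, 0 < c - b * ‖y‖ ^ 2 :=
  (by fun_prop : Continuous fun y : E => c - b * ‖y‖ ^ 2).continuousAt.eventually
    (lt_mem_nhds hx)

theorem hasFDerivAt_rpow_sub_mul_norm_sq [InnerProductSpace ℝ E] {c b p : ℝ} {y : E}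
    (hy : 0 < c - b * ‖y‖ ^ 2) :
    HasFDerivAt (fun z : E => (c - b * ‖z‖ ^ 2) ^ p)
      ((p * (c - b * ‖y‖ ^ 2) ^ (p - 1) * (-2 * b)) • innerSL ℝ y) y := by
  convert (((hasStrictFDerivAt_norm_sq y).hasFDerivAt.const_mul b).const_sub c).rpow_const
    (p := p) (Or.inl hy.ne') using 1
  ext v
  simp
  ring

end NormSq

section Divergence

variable {ι : Type*} [Fintype ι] [DecidableEq ι]

theorem sum_fderiv_mul_rpow_sub_mul_norm_sq_mul_apply (A b c p : ℝ) {x : EuclideanSpace ℝ ι}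
    (hx : 0 < c - b * ‖x‖ ^ 2) :
    ∑ i, fderiv ℝ (fun y : EuclideanSpace ℝ ι => A * (c - b * ‖y‖ ^ 2) ^ p * y i) x
        (EuclideanSpace.single i 1)
      = A * (p * (c - b * ‖x‖ ^ 2) ^ (p - 1) * (-2 * b) * ‖x‖ ^ 2
          + Fintype.card ι * (c - b * ‖x‖ ^ 2) ^ p) := by
  have hpartial : ∀ i, fderiv ℝ (fun y : EuclideanSpace ℝ ι => A * (c - b * ‖y‖ ^ 2) ^ p * y i)
      x (EuclideanSpace.single i 1)
        = A * (p * (c - b * ‖x‖ ^ 2) ^ (p - 1) * (-2 * b)) * x i ^ 2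
          + A * (c - b * ‖x‖ ^ 2) ^ p := by
    intro i
    have h : HasFDerivAt (fun y : EuclideanSpace ℝ ι => A * (c - b * ‖y‖ ^ 2) ^ p * y i) _ x :=
      ((hasFDerivAt_rpow_sub_mul_norm_sq hx).const_mul A).mul
        (EuclideanSpace.proj (𝕜 := ℝ) i).hasFDerivAt
    rw [h.fderiv]
    simp [EuclideanSpace.inner_single_right]
    ring
  rw [Finset.sum_congr rfl fun i _ => hpartial i, Finset.sum_add_distrib, ← Finset.mul_sum,
    ← EuclideanSpace.real_norm_sq_eq, Finset.sum_const, Finset.card_univ, nsmul_eq_mul]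
  ring

end Divergence

section Barenblatt

variable {d : ℕ} {m C α β k t : ℝ} {y : EuclideanSpace ℝ (Fin d)}

theorem uBP_eq_of_pos (hy : 0 < C - k * t ^ (-(2 * β)) * ‖y‖ ^ 2) :
    uBP d m C α β k y t = t ^ (-α) * (C - k * t ^ (-(2 * β)) * ‖y‖ ^ 2) ^ (1 / m) := by
  rw [uBP, mul_right_comm k, max_eq_left hy.le]

theorem hasFDerivAt_uBP_space (hy : 0 < C - k * t ^ (-(2 * β)) * ‖y‖ ^ 2) :
    HasFDerivAt (fun z => uBP d m C α β k z t)
      ((t ^ (-α) * (1 / m * (C - k * t ^ (-(2 * β)) * ‖y‖ ^ 2) ^ (1 / m - 1)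
        * (-2 * (k * t ^ (-(2 * β)))))) • innerSL ℝ y) y := by
  rw [← smul_smul]
  exact ((hasFDerivAt_rpow_sub_mul_norm_sq hy).const_mul (t ^ (-α))).congr_of_eventuallyEq
    ((eventually_pos_sub_mul_norm_sq hy).mono fun z hz => uBP_eq_of_pos hz)

theorem uBP_rpow_mul_fderiv_uBP_space (hm : m ≠ 0) (ht : 0 < t)
    (hy : 0 < C - k * t ^ (-(2 * β)) * ‖y‖ ^ 2) (i : Fin d) :
    uBP d m C α β k y t ^ m *
        fderiv ℝ (fun z => uBP d m C α β k z t) y (EuclideanSpace.single i 1)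
      = (t ^ (-α)) ^ (m + 1) * (-2 * (k * t ^ (-(2 * β))) / m)
          * (C - k * t ^ (-(2 * β)) * ‖y‖ ^ 2) ^ (1 / m) * y i := by
  have ha : 0 < t ^ (-α) := rpow_pos_of_pos ht _
  rw [(hasFDerivAt_uBP_space hy).fderiv, uBP_eq_of_pos hy, mul_rpow ha.le (rpow_nonneg hy.le _),
    ← rpow_mul hy.le, one_div_mul_cancel hm, rpow_one, rpow_add_one ha.ne', rpow_sub_one hy.ne']
  simp [EuclideanSpace.inner_single_right]
  field_simp

theorem fderiv_uBP_rpow_succ_space (hm : 0 ≤ m) (hy : 0 < C - k * t ^ (-(2 * β)) * ‖y‖ ^ 2)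
    (v : EuclideanSpace ℝ (Fin d)) :
    fderiv ℝ (fun z => uBP d m C α β k z t ^ (m + 1)) y v
      = (m + 1) * (uBP d m C α β k y t ^ m * fderiv ℝ (fun z => uBP d m C α β k z t) y v) := by
  have hu := hasFDerivAt_uBP_space (d := d) (m := m) (α := α) hy
  rw [(hu.rpow_const (Or.inr (by linarith))).fderiv, hu.fderiv]
  simp
  ring

theorem hasDerivAt_uBP_time (ht : 0 < t) (hy : 0 < C - k * t ^ (-(2 * β)) * ‖y‖ ^ 2) :
    HasDerivAt (fun s => uBP d m C α β k y s)
      (-α * t ^ (-α - 1) * (C - k * t ^ (-(2 * β)) * ‖y‖ ^ 2) ^ (1 / m)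
        + t ^ (-α) * (1 / m * (C - k * t ^ (-(2 * β)) * ‖y‖ ^ 2) ^ (1 / m - 1)
          * (2 * β * k * ‖y‖ ^ 2 * t ^ (-(2 * β) - 1)))) t := by
  have hpow (p : ℝ) : HasDerivAt (fun s : ℝ => s ^ p) (p * t ^ (p - 1)) t :=
    hasDerivAt_rpow_const (Or.inl ht.ne')
  have hg : HasDerivAt (fun s => C - k * s ^ (-(2 * β)) * ‖y‖ ^ 2)
      (2 * β * k * ‖y‖ ^ 2 * t ^ (-(2 * β) - 1)) t :=
    ((((hpow _).const_mul k).mul_const (‖y‖ ^ 2)).const_sub C).congr_deriv (by ring)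
  have hnear : ∀ᶠ s in 𝓝 t, 0 < C - k * s ^ (-(2 * β)) * ‖y‖ ^ 2 :=
    hg.continuousAt.eventually (lt_mem_nhds hy)
  exact (((hpow (-α)).mul (hg.rpow_const (Or.inl hy.ne'))).congr_deriv (by ring))
    |>.congr_of_eventuallyEq (hnear.mono fun s hs => uBP_eq_of_pos hs)

theorem barenblatt_exponent_relation (hd : d ≠ 0) (hm : 0 < m) (hα : α = d / (m * d + 2))
    (hβ : β = α / d) : α * m + 2 * β = 1 := by
  have : (0 : ℝ) < d := by positivity
  subst hα hβ
  field_simp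

theorem barenblatt_coefficient_identity {κ r : ℝ} (hd : d ≠ 0) (hm : 0 < m) (hκ : κ ≠ 0)
    (hα : α = d / (m * d + 2)) (hβ : β = α / d) (hk : k = m * α / (2 * κ * d)) (ht : 0 < t)
    (hg : 0 < C - k * t ^ (-(2 * β)) * r) :
    -α * t ^ (-α - 1) * (C - k * t ^ (-(2 * β)) * r) ^ (1 / m)
        + t ^ (-α) * (1 / m * (C - k * t ^ (-(2 * β)) * r) ^ (1 / m - 1)
          * (2 * β * k * r * t ^ (-(2 * β) - 1)))
      = κ * ((t ^ (-α)) ^ (m + 1) * (-2 * (k * t ^ (-(2 * β))) / m))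
        * (1 / m * (C - k * t ^ (-(2 * β)) * r) ^ (1 / m - 1) * (-2 * (k * t ^ (-(2 * β)))) * r
          + d * (C - k * t ^ (-(2 * β)) * r) ^ (1 / m)) := by
  have ha : 0 < t ^ (-α) := rpow_pos_of_pos ht _
  have hscale : t ^ (-(2 * β)) = t⁻¹ / (t ^ (-α)) ^ m := by
    rw [eq_div_iff (rpow_pos_of_pos ha _).ne', ← rpow_mul ht.le, ← rpow_add ht, neg_mul, ← neg_add,
      add_comm, barenblatt_exponent_relation hd hm hα hβ, rpow_neg_one]
  rw [rpow_sub_one ht.ne', rpow_sub_one ht.ne', rpow_add_one ha.ne', rpow_sub_one hg.ne']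
  rw [hscale]
  subst hβ hk
  field_simp
  ring

end Barenblatt

theorem barenblatt_solves_PME_classically_general
    (d : ℕ) (hd : 1 ≤ d) (m κ C α β k : ℝ)
    (hm : 0 < m) (hκ : 0 < κ)
    (hα : α = d / (m * d + 2)) (hβ : β = α / d) (hk : k = m * α / (2 * κ * d))
    (t : ℝ) (ht : 0 < t) (x : EuclideanSpace ℝ (Fin d))
    (hx : 0 < C - k * ‖x‖ ^ 2 * t ^ (-(2 * β))) :
    deriv (fun s => uBP d m C α β k x s) t =
      ∑ i : Fin d,
        fderiv ℝ
          (fun y => κ * uBP d m C α β k y t ^ m *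
            fderiv ℝ (fun z => uBP d m C α β k z t) y (EuclideanSpace.single i 1))
          x (EuclideanSpace.single i 1) ∧
    deriv (fun s => uBP d m C α β k x s) t =
      (κ / (m + 1)) *
        ∑ i : Fin d,
          fderiv ℝ
            (fun y =>
              fderiv ℝ (fun z => uBP d m C α β k z t ^ (m + 1)) y
                (EuclideanSpace.single i 1))
            x (EuclideanSpace.single i 1) := by
  rw [mul_right_comm] at hx
  have hnear := eventually_pos_sub_mul_norm_sq hx
  set A := (t ^ (-α)) ^ (m + 1) * (-2 * (k * t ^ (-(2 * β))) / m) with hA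
  have hflux (i : Fin d) :
      (fun y => κ * uBP d m C α β k y t ^ m *
          fderiv ℝ (fun z => uBP d m C α β k z t) y (EuclideanSpace.single i 1))
        =ᶠ[𝓝 x] fun y => κ * A * (C - k * t ^ (-(2 * β)) * ‖y‖ ^ 2) ^ (1 / m) * y i :=
    hnear.mono fun y hy => by
      dsimp only
      rw [mul_assoc κ, uBP_rpow_mul_fderiv_uBP_space hm.ne' ht hy]
      ring
  have hgrad (i : Fin d) :
      (fun y => fderiv ℝ (fun z => uBP d m C α β k z t ^ (m + 1)) y (EuclideanSpace.single i 1))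
        =ᶠ[𝓝 x] fun y => (m + 1) * A * (C - k * t ^ (-(2 * β)) * ‖y‖ ^ 2) ^ (1 / m) * y i :=
    hnear.mono fun y hy => by
      dsimp only
      rw [fderiv_uBP_rpow_succ_space hm.le hy, uBP_rpow_mul_fderiv_uBP_space hm.ne' ht hy]
      ring
  rw [Finset.sum_congr rfl fun i _ => by rw [(hflux i).fderiv_eq],
    sum_fderiv_mul_rpow_sub_mul_norm_sq_mul_apply _ _ _ _ hx,
    Finset.sum_congr rfl fun i _ => by rw [(hgrad i).fderiv_eq],
    sum_fderiv_mul_rpow_sub_mul_norm_sq_mul_apply _ _ _ _ hx, Fintype.card_fin]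
  rw [(hasDerivAt_uBP_time ht hx).deriv,
    barenblatt_coefficient_identity (by omega) hm hκ.ne' hα hβ hk ht hx]
  constructor
  · ring
  · rw [hA]
    field_simp

/-- Wherever `C − k‖x‖² t^{−2β} > 0`, the Barenblatt–Pattle function satisfies the
Porous Medium Equation classically: its time derivative equals κ times the spatial
divergence of `u^m ∇u`, equivalently `(κ/(m+1)) Δ (u^{m+1})`. -/
theorem barenblatt_solves_PME_classically
    (d : ℕ) (hd : 1 ≤ d) (m κ C α β k : ℝ)
    (hm : 0 < m) (hκ : 0 < κ) (hC : 0 < C)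
    (hα : α = d / (m * d + 2)) (hβ : β = α / d) (hk : k = m * α / (2 * κ * d))
    (t : ℝ) (ht : 0 < t) (x : EuclideanSpace ℝ (Fin d))
    (hx : 0 < C - k * ‖x‖ ^ 2 * t ^ (-(2 * β))) :
    deriv (fun s => uBP d m C α β k x s) t =
      ∑ i : Fin d,
        fderiv ℝ
          (fun y => κ * uBP d m C α β k y t ^ m *
            fderiv ℝ (fun z => uBP d m C α β k z t) y (EuclideanSpace.single i 1))
          x (EuclideanSpace.single i 1) ∧
    deriv (fun s => uBP d m C α β k x s) t =
      (κ / (m + 1)) *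
        ∑ i : Fin d,
          fderiv ℝ
            (fun y =>
              fderiv ℝ (fun z => uBP d m C α β k z t ^ (m + 1)) y
                (EuclideanSpace.single i 1))
            x (EuclideanSpace.single i 1) :=
  barenblatt_solves_PME_classically_general d hd m κ C α β k hm hκ hα hβ hk t ht x hx
end

section
/- Let d ≥ 1, m > 0, κ > 0, C > 0, and set α = d/(m d + 2), β = α/d, k = m α/(2 κ d), f(t) = (C/k)^{1/2} t^{β}. For every t > 0, the topological support of the function x ↦ u_BP(x,t) equals the closed Euclidean ball of radius f(t) centered at the origin (in particular it is compact), and the topological frontier of the positivity set {x : u_BP(x,t) > 0} equals the sphere {x ∈ ℝ^d : ‖x‖ = f(t)}. -/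
open Metric

/-- The interface radius `f(t)`. -/
noncomputable def barenblattRadius (C k β t : ℝ) : ℝ :=
  (C / k) ^ ((1 : ℝ) / 2) * t ^ β

lemma barenblattRadius_pos {C k β t : ℝ} (hC : 0 < C) (hk : 0 < k) (ht : 0 < t) :
    0 < barenblattRadius C k β t := by
  unfold barenblattRadius
  positivity

lemma barenblattRadius_nonneg {C k β t : ℝ} (hC : 0 ≤ C) (hk : 0 ≤ k) (ht : 0 ≤ t) :
    0 ≤ barenblattRadius C k β t := by
  unfold barenblattRadius
  positivity

lemma barenblattRadius_sq {C k β t : ℝ} (hC : 0 ≤ C) (hk : 0 ≤ k) (ht : 0 ≤ t) :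
    barenblattRadius C k β t ^ 2 = C / k * t ^ (2 * β) := by
  rw [barenblattRadius, mul_pow, ← Real.sqrt_eq_rpow, Real.sq_sqrt (by positivity), mul_comm 2 β,
    Real.rpow_mul ht, Real.rpow_two]

lemma max_zero_rpow_pos_iff {s p : ℝ} (hp : p ≠ 0) : 0 < max s 0 ^ p ↔ 0 < s := by
  have hnonneg : 0 ≤ max s 0 := le_max_right s 0
  rw [(Real.rpow_nonneg hnonneg p).lt_iff_ne', Ne, Real.rpow_eq_zero hnonneg hp,
    ← Ne, ← hnonneg.lt_iff_ne', lt_max_iff, or_iff_left (lt_irrefl 0)]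

section Profile

variable {d : ℕ} {m C α β k t : ℝ}

lemma uBP_nonneg (ht : 0 ≤ t) (x : EuclideanSpace ℝ (Fin d)) : 0 ≤ uBP d m C α β k x t :=
  mul_nonneg (Real.rpow_nonneg ht _) (Real.rpow_nonneg (le_max_right _ _) _)

lemma uBP_pos_iff (hm : m ≠ 0) (hC : 0 ≤ C) (hk : 0 < k) (ht : 0 < t)
    (x : EuclideanSpace ℝ (Fin d)) :
    0 < uBP d m C α β k x t ↔ ‖x‖ < barenblattRadius C k β t := by
  have htβ : 0 < t ^ (2 * β) := Real.rpow_pos_of_pos ht _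
  rw [uBP, mul_pos_iff_of_pos_left (Real.rpow_pos_of_pos ht _),
    max_zero_rpow_pos_iff (one_div_ne_zero hm), sub_pos, Real.rpow_neg ht.le, ← div_eq_mul_inv,
    div_lt_iff₀ htβ, ← sq_lt_sq₀ (norm_nonneg x) (barenblattRadius_nonneg hC hk.le ht.le),
    barenblattRadius_sq hC hk.le ht.le, div_mul_eq_mul_div, lt_div_iff₀ hk, mul_comm]

lemma setOf_uBP_pos_eq_ball (hm : m ≠ 0) (hC : 0 ≤ C) (hk : 0 < k) (ht : 0 < t) :
    {x : EuclideanSpace ℝ (Fin d) | 0 < uBP d m C α β k x t} =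
      ball 0 (barenblattRadius C k β t) := by
  ext x
  rw [Set.mem_ofPred_eq, mem_ball_zero_iff, uBP_pos_iff hm hC hk ht]

lemma support_uBP_eq_ball (hm : m ≠ 0) (hC : 0 ≤ C) (hk : 0 < k) (ht : 0 < t) :
    Function.support (fun x : EuclideanSpace ℝ (Fin d) => uBP d m C α β k x t) =
      ball 0 (barenblattRadius C k β t) := by
  rw [← setOf_uBP_pos_eq_ball hm hC hk ht]
  ext x
  exact (uBP_nonneg ht.le x).lt_iff_ne'.symm

lemma tsupport_uBP_eq_closedBall (hm : m ≠ 0) (hC : 0 < C) (hk : 0 < k) (ht : 0 < t) :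
    tsupport (fun x : EuclideanSpace ℝ (Fin d) => uBP d m C α β k x t) =
      closedBall 0 (barenblattRadius C k β t) := by
  rw [tsupport, support_uBP_eq_ball hm hC.le hk ht,
    closure_ball _ (barenblattRadius_pos hC hk ht).ne']

lemma frontier_setOf_uBP_pos (hm : m ≠ 0) (hC : 0 < C) (hk : 0 < k) (ht : 0 < t) :
    frontier {x : EuclideanSpace ℝ (Fin d) | 0 < uBP d m C α β k x t} =
      sphere 0 (barenblattRadius C k β t) := by
  rw [setOf_uBP_pos_eq_ball hm hC.le hk ht, frontier_ball _ (barenblattRadius_pos hC hk ht).ne']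

end Profile

theorem barenblatt_support_and_interface_general
    (d : ℕ) (hd : 1 ≤ d) (m κ C α β k : ℝ)
    (hm : 0 < m) (hκ : 0 < κ) (hC : 0 < C)
    (hα : α = d / (m * d + 2)) (hk : k = m * α / (2 * κ * d))
    (t : ℝ) (ht : 0 < t) :
    tsupport (fun x : EuclideanSpace ℝ (Fin d) => uBP d m C α β k x t) =
      Metric.closedBall (0 : EuclideanSpace ℝ (Fin d)) ((C / k) ^ ((1 : ℝ) / 2) * t ^ β) ∧
    IsCompact (tsupport (fun x : EuclideanSpace ℝ (Fin d) => uBP d m C α β k x t)) ∧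
    frontier {x : EuclideanSpace ℝ (Fin d) | 0 < uBP d m C α β k x t} =
      Metric.sphere (0 : EuclideanSpace ℝ (Fin d)) ((C / k) ^ ((1 : ℝ) / 2) * t ^ β) := by
  have hk_pos : 0 < k := by
    have hd_pos : (0 : ℝ) < d := by exact_mod_cast hd
    rw [hk, hα]
    positivity
  have hsupp := tsupport_uBP_eq_closedBall (d := d) (α := α) (β := β) hm.ne' hC hk_pos ht
  exact ⟨hsupp, hsupp ▸ isCompact_closedBall _ _, frontier_setOf_uBP_pos hm.ne' hC hk_pos ht⟩

/-- At each time `t > 0`, the topological support of the Barenblatt–Pattle profile is the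
closed ball of radius `f(t) = (C/k)^{1/2} t^β` (in particular it is compact), and the
frontier of its positivity set is the sphere of radius `f(t)`. -/
theorem barenblatt_support_and_interface
    (d : ℕ) (hd : 1 ≤ d) (m κ C α β k : ℝ)
    (hm : 0 < m) (hκ : 0 < κ) (hC : 0 < C)
    (hα : α = d / (m * d + 2)) (hβ : β = α / d) (hk : k = m * α / (2 * κ * d))
    (t : ℝ) (ht : 0 < t) :
    tsupport (fun x : EuclideanSpace ℝ (Fin d) => uBP d m C α β k x t) =
      Metric.closedBall (0 : EuclideanSpace ℝ (Fin d)) ((C / k) ^ ((1 : ℝ) / 2) * t ^ β) ∧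
    IsCompact (tsupport (fun x : EuclideanSpace ℝ (Fin d) => uBP d m C α β k x t)) ∧
    frontier {x : EuclideanSpace ℝ (Fin d) | 0 < uBP d m C α β k x t} =
      Metric.sphere (0 : EuclideanSpace ℝ (Fin d)) ((C / k) ^ ((1 : ℝ) / 2) * t ^ β) :=
  barenblatt_support_and_interface_general d hd m κ C α β k hm hκ hC hα hk t ht
end

section
/- Let d ≥ 1, κ > 0, C > 0 and 0 < m < 1, and set α = d/(m d + 2), β = α/d, k = m α/(2 κ d), f(t) = (C/k)^{1/2} t^{β}. Then for every t > 0 the function x ↦ u_BP(x,t) is differentiable at every point of ℝ^d; moreover its derivative vanishes at every interface point x with ‖x‖ = f(t), and the derivative map x ↦ D(u_BP(·,t))(x) is continuous on ℝ^d (i.e., u_BP(·,t) is C¹). -/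
open Real

section
variable {p : ℝ}

theorem continuous_max_zero_rpow (hp : 0 ≤ p) : Continuous fun s : ℝ => max s 0 ^ p :=
  (continuous_id.max continuous_const).rpow_const fun _ => Or.inr hp

theorem hasDerivAt_max_zero_rpow (hp : 1 < p) (s : ℝ) :
    HasDerivAt (fun s : ℝ => max s 0 ^ p) (p * max s 0 ^ (p - 1)) s := by
  -- Away from `0` the function is locally `0` or `s ^ p`; at `0` it suffices that the
  -- candidate derivative is continuous.
  refine hasDerivAt_of_hasDerivAt_of_ne' (g := fun s => p * max s 0 ^ (p - 1)) (x := 0)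
    (fun y hy => ?_) (continuous_max_zero_rpow (by linarith)).continuousAt
    (continuous_const.mul (continuous_max_zero_rpow (by linarith))).continuousAt s
  rcases hy.lt_or_gt with hy | hy
  · have hzero : (fun s : ℝ => max s 0 ^ p) =ᶠ[nhds y] fun _ => 0 := by
      filter_upwards [Iio_mem_nhds hy] with s hs
      rw [max_eq_right hs.le, zero_rpow (by linarith)]
    rw [max_eq_right hy.le, zero_rpow (by linarith), mul_zero]
    exact (hasDerivAt_const y 0).congr_of_eventuallyEq hzero
  · have hid : (fun s : ℝ => max s 0 ^ p) =ᶠ[nhds y] fun s => s ^ p := by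
      filter_upwards [Ioi_mem_nhds hy] with s hs
      rw [max_eq_left hs.le]
    rw [max_eq_left hy.le]
    exact (hasDerivAt_rpow_const (Or.inl hy.ne')).congr_of_eventuallyEq hid

theorem contDiff_one_max_zero_rpow (hp : 1 < p) : ContDiff ℝ 1 fun s : ℝ => max s 0 ^ p := by
  refine contDiff_one_iff_deriv.2
    ⟨fun s => (hasDerivAt_max_zero_rpow hp s).differentiableAt, ?_⟩
  rw [funext fun s => (hasDerivAt_max_zero_rpow hp s).deriv]
  exact continuous_const.mul (continuous_max_zero_rpow (by linarith))

theorem hasFDerivAt_max_zero_rpow_sub_mul_norm_sq_of_eq {E : Type*} [NormedAddCommGroup E]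
    [InnerProductSpace ℝ E] (hp : 1 < p) {a C : ℝ} {x : E} (hx : a * ‖x‖ ^ 2 = C) :
    HasFDerivAt (fun y : E => max (C - a * ‖y‖ ^ 2) 0 ^ p) (0 : E →L[ℝ] ℝ) x := by
  have h := (hasDerivAt_max_zero_rpow hp (C - a * ‖x‖ ^ 2)).comp_hasFDerivAt x
    (((hasFDerivAt_id x).norm_sq.const_mul a).const_sub C)
  rwa [hx, sub_self, max_self, zero_rpow (by linarith), mul_zero, zero_smul] at h

end

theorem barenblatt_interface_sq {k C t β : ℝ} (hk : 0 < k) (hC : 0 ≤ C) (ht : 0 < t) :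
    k * t ^ (-(2 * β)) * ((C / k) ^ ((1 : ℝ) / 2) * t ^ β) ^ 2 = C := by
  rw [← sqrt_eq_rpow, mul_pow, sq_sqrt (div_nonneg hC hk.le), ← rpow_mul_natCast ht.le,
    rpow_neg ht.le, Nat.cast_ofNat, mul_comm β]
  field_simp

theorem uBP_eq (d : ℕ) (m C α β k t : ℝ) :
    (fun y => uBP d m C α β k y t) =
      fun y => t ^ (-α) * max (C - k * t ^ (-(2 * β)) * ‖y‖ ^ 2) 0 ^ (1 / m) := by
  simp only [uBP, mul_right_comm k]

theorem barenblatt_C1_for_m_lt_one_general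
    (d : ℕ) (hd : 1 ≤ d) (m κ C α β k : ℝ)
    (hm : 0 < m) (hm1 : m < 1) (hκ : 0 < κ) (hC : 0 < C)
    (hα : α = d / (m * d + 2)) (hk : k = m * α / (2 * κ * d))
    (t : ℝ) (ht : 0 < t) :
    (∀ x : EuclideanSpace ℝ (Fin d),
      DifferentiableAt ℝ (fun y => uBP d m C α β k y t) x) ∧
    (∀ x : EuclideanSpace ℝ (Fin d), ‖x‖ = (C / k) ^ ((1 : ℝ) / 2) * t ^ β →
      fderiv ℝ (fun y => uBP d m C α β k y t) x = 0) ∧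
    Continuous (fun x : EuclideanSpace ℝ (Fin d) =>
      fderiv ℝ (fun y => uBP d m C α β k y t) x) := by
  have hd0 : (0 : ℝ) < d := by exact_mod_cast hd
  have hk0 : 0 < k := by rw [hk, hα]; positivity
  have hp : 1 < 1 / m := one_lt_one_div hm hm1
  have hC1 : ContDiff ℝ 1 fun y => uBP d m C α β k y t := by
    rw [uBP_eq]
    exact contDiff_const.mul ((contDiff_one_max_zero_rpow hp).comp
      (contDiff_const.sub (contDiff_const.mul (contDiff_norm_sq ℝ))))
  obtain ⟨hdiff, hcont⟩ := contDiff_one_iff_fderiv.1 hC1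
  refine ⟨hdiff, fun x hx => ?_, hcont⟩
  have hinterface : k * t ^ (-(2 * β)) * ‖x‖ ^ 2 = C := by
    rw [hx]; exact barenblatt_interface_sq hk0 hC.le ht
  rw [uBP_eq, ((hasFDerivAt_max_zero_rpow_sub_mul_norm_sq_of_eq hp hinterface).const_mul
    (t ^ (-α))).fderiv, smul_zero]

/-- For `0 < m < 1`, the Barenblatt–Pattle profile at each time `t > 0` is differentiable
everywhere, its derivative vanishes at interface points `‖x‖ = f(t)`, and the derivative
map is continuous (the profile is `C¹`). -/
theorem barenblatt_C1_for_m_lt_one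
    (d : ℕ) (hd : 1 ≤ d) (m κ C α β k : ℝ)
    (hm : 0 < m) (hm1 : m < 1) (hκ : 0 < κ) (hC : 0 < C)
    (hα : α = d / (m * d + 2)) (hβ : β = α / d) (hk : k = m * α / (2 * κ * d))
    (t : ℝ) (ht : 0 < t) :
    (∀ x : EuclideanSpace ℝ (Fin d),
      DifferentiableAt ℝ (fun y => uBP d m C α β k y t) x) ∧
    (∀ x : EuclideanSpace ℝ (Fin d), ‖x‖ = (C / k) ^ ((1 : ℝ) / 2) * t ^ β →
      fderiv ℝ (fun y => uBP d m C α β k y t) x = 0) ∧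
    Continuous (fun x : EuclideanSpace ℝ (Fin d) =>
      fderiv ℝ (fun y => uBP d m C α β k y t) x) :=
  barenblatt_C1_for_m_lt_one_general d hd m κ C α β k hm hm1 hκ hC hα hk t ht
end

section
/- Let d ≥ 1, κ > 0, C > 0 and m ≥ 1, and set α = d/(m d + 2), β = α/d, k = m α/(2 κ d), f(t) = (C/k)^{1/2} t^{β}. Then for every t > 0 and every interface point x₀ ∈ ℝ^d with ‖x₀‖ = f(t), the function x ↦ u_BP(x,t) is NOT differentiable at x₀; the Barenblatt–Pattle solution is only continuous, not C¹, across its interface. -/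
/-!
Restrict `uBP(·, t)` to the ray `r ↦ r • x₀` through the interface point. Since
`k ‖x₀‖² t^{-2β} = C`, the restriction is `t^{-α} (max (C (1 - r²)) 0)^{1/m}`. It vanishes for
`r > 1`, so a derivative at `r = 1` would be `0`; but for `m ≥ 1` and `r < 1` near `1` it is at
least `t^{-α} C (1 - r)`, because `y ≤ y^{1/m}` on `[0, 1]`, so the left difference quotients
stay below `-t^{-α} C`.
-/

open Filter Topology

theorem not_differentiableAt_of_eventually_const_right_of_linear_growth_left
    {f : ℝ → ℝ} {a c : ℝ} (hc : 0 < c) (hright : ∀ᶠ x in 𝓝[>] a, f x = f a)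
    (hleft : ∀ᶠ x in 𝓝[<] a, f a + c * (a - x) ≤ f x) : ¬ DifferentiableAt ℝ f a := by
  intro hf
  have hslope := hasDerivAt_iff_tendsto_slope.mp hf.hasDerivAt
  have hderiv_zero : deriv f a = 0 := by
    refine tendsto_nhds_unique (hslope.mono_left (nhdsGT_le_nhdsNE a)) ?_
    refine tendsto_const_nhds.congr' ?_
    filter_upwards [hright] with x hx
    rw [slope_def_field, hx, sub_self, zero_div]
  have hderiv_le : deriv f a ≤ -c := by
    refine le_of_tendsto (hslope.mono_left (nhdsLT_le_nhdsNE a)) ?_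
    filter_upwards [hleft, self_mem_nhdsWithin] with x hx (hxa : x < a)
    rw [slope_def_field, div_le_iff_of_neg (sub_neg.mpr hxa)]
    linarith
  linarith

section Profile

variable {A C m : ℝ}

theorem eventually_profile_eq_zero_nhdsGT_one (hC : 0 ≤ C) (hm : m ≠ 0) :
    ∀ᶠ r in 𝓝[>] (1 : ℝ), A * max (C * (1 - r ^ 2)) 0 ^ (1 / m) = 0 := by
  filter_upwards [self_mem_nhdsWithin] with r (hr : 1 < r)
  have hneg : C * (1 - r ^ 2) ≤ 0 := mul_nonpos_of_nonneg_of_nonpos hC (by nlinarith)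
  rw [max_eq_right hneg, Real.zero_rpow (one_div_ne_zero hm), mul_zero]

theorem eventually_linear_le_profile_nhdsLT_one (hA : 0 ≤ A) (hC : 0 < C) (hm : 1 ≤ m) :
    ∀ᶠ r in 𝓝[<] (1 : ℝ), A * C * (1 - r) ≤ A * max (C * (1 - r ^ 2)) 0 ^ (1 / m) := by
  filter_upwards [Ioo_mem_nhdsLT (max_lt zero_lt_one (sub_lt_self 1 (one_div_pos.mpr hC)))]
    with r ⟨hlo, hr1⟩
  obtain ⟨hr0, hrC⟩ := max_lt_iff.mp hlo
  have hsmall_nonneg : 0 ≤ C * (1 - r) := by nlinarith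
  have hsmall_le_one : C * (1 - r) ≤ 1 := by
    rw [sub_lt_comm, lt_div_iff₀ hC] at hrC
    linarith
  have hsmall_le : C * (1 - r) ≤ max (C * (1 - r ^ 2)) 0 :=
    le_max_of_le_left (by nlinarith)
  rw [mul_assoc]
  gcongr
  calc C * (1 - r) ≤ (C * (1 - r)) ^ (1 / m) :=
        Real.self_le_rpow_of_le_one hsmall_nonneg hsmall_le_one
          ((div_le_one (by linarith)).mpr hm)
    _ ≤ max (C * (1 - r ^ 2)) 0 ^ (1 / m) :=
        Real.rpow_le_rpow hsmall_nonneg hsmall_le (by positivity)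

end Profile

theorem barenblatt_k_pos {d : ℕ} (hd : 1 ≤ d) {m κ α k : ℝ} (hm : 0 < m) (hκ : 0 < κ)
    (hα : α = d / (m * d + 2)) (hk : k = m * α / (2 * κ * d)) : 0 < k := by
  have hd' : (0 : ℝ) < d := by exact_mod_cast hd
  have hα_pos : 0 < α := hα ▸ by positivity
  exact hk ▸ by positivity

theorem mul_norm_sq_mul_rpow_eq_of_norm_eq {d : ℕ} {C k β t : ℝ} {x₀ : EuclideanSpace ℝ (Fin d)}
    (hC : 0 ≤ C) (hk : 0 < k) (ht : 0 < t)
    (hx₀ : ‖x₀‖ = (C / k) ^ ((1 : ℝ) / 2) * t ^ β) :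
    k * ‖x₀‖ ^ 2 * t ^ (-(2 * β)) = C := by
  have hnorm_sq : ‖x₀‖ ^ 2 = C / k * t ^ (2 * β) := by
    rw [hx₀, mul_pow, ← Real.rpow_natCast, ← Real.rpow_natCast (t ^ β),
      ← Real.rpow_mul (by positivity), ← Real.rpow_mul ht.le]
    norm_num [mul_comm β 2]
  rw [hnorm_sq, Real.rpow_neg ht.le]
  field_simp

theorem uBP_smul_of_interface {d : ℕ} {m C α β k t : ℝ} {x₀ : EuclideanSpace ℝ (Fin d)}
    (hx₀ : k * ‖x₀‖ ^ 2 * t ^ (-(2 * β)) = C) (r : ℝ) :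
    uBP d m C α β k (r • x₀) t = t ^ (-α) * max (C * (1 - r ^ 2)) 0 ^ (1 / m) := by
  rw [uBP, norm_smul, Real.norm_eq_abs, mul_pow, sq_abs, ← hx₀]
  ring_nf

theorem barenblatt_not_differentiable_at_interface_general
    (d : ℕ) (hd : 1 ≤ d) (m κ C α β k : ℝ)
    (hm : 1 ≤ m) (hκ : 0 < κ) (hC : 0 < C)
    (hα : α = d / (m * d + 2)) (hk : k = m * α / (2 * κ * d))
    (t : ℝ) (ht : 0 < t) (x₀ : EuclideanSpace ℝ (Fin d))
    (hx₀ : ‖x₀‖ = (C / k) ^ ((1 : ℝ) / 2) * t ^ β) :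
    ¬ DifferentiableAt ℝ (fun y => uBP d m C α β k y t) x₀ := by
  intro hdiff
  have hk_pos := barenblatt_k_pos hd (by linarith) hκ hα hk
  have hinterface := mul_norm_sq_mul_rpow_eq_of_norm_eq hC.le hk_pos ht hx₀
  have hray : DifferentiableAt ℝ (fun r : ℝ => uBP d m C α β k (r • x₀) t) 1 := by
    refine DifferentiableAt.comp (g := fun y => uBP d m C α β k y t) 1 ?_
      (differentiableAt_id.smul_const x₀)
    simpa using hdiff
  simp only [uBP_smul_of_interface hinterface] at hray
  have htα : 0 < t ^ (-α) := Real.rpow_pos_of_pos ht _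
  have hvertex : t ^ (-α) * max (C * (1 - 1 ^ 2)) 0 ^ (1 / m) = 0 := by
    rw [one_pow, sub_self, mul_zero, max_self, Real.zero_rpow (one_div_ne_zero (by linarith)),
      mul_zero]
  refine not_differentiableAt_of_eventually_const_right_of_linear_growth_left
    (mul_pos htα hC) ?_ ?_ hray <;> rw [hvertex]
  · exact eventually_profile_eq_zero_nhdsGT_one hC.le (by linarith)
  · simpa using eventually_linear_le_profile_nhdsLT_one htα.le hC hm

/-- For `m ≥ 1`, the Barenblatt–Pattle profile at each time `t > 0` is not differentiable
at any interface point `‖x₀‖ = f(t)`: the solution is only continuous, not `C¹`, across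
its interface. -/
theorem barenblatt_not_differentiable_at_interface
    (d : ℕ) (hd : 1 ≤ d) (m κ C α β k : ℝ)
    (hm : 1 ≤ m) (hκ : 0 < κ) (hC : 0 < C)
    (hα : α = d / (m * d + 2)) (hβ : β = α / d) (hk : k = m * α / (2 * κ * d))
    (t : ℝ) (ht : 0 < t) (x₀ : EuclideanSpace ℝ (Fin d))
    (hx₀ : ‖x₀‖ = (C / k) ^ ((1 : ℝ) / 2) * t ^ β) :
    ¬ DifferentiableAt ℝ (fun y => uBP d m C α β k y t) x₀ :=
  barenblatt_not_differentiable_at_interface_general d hd m κ C α β k hm hκ hC hα hk t ht x₀ hx₀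
end

section
/- Let d ≥ 1, m > 0, κ > 0, C > 0, and set α = d/(m d + 2), β = α/d, k = m α/(2 κ d), and let M = ∫_{ℝ^d} u_BP(x,1) dx. Then the Barenblatt–Pattle solution has a Dirac mass at the origin as initial datum in the weak sense: for every bounded continuous function φ : ℝ^d → ℝ, the integral ∫_{ℝ^d} u_BP(x,t) φ(x) dx tends to M · φ(0) as t → 0⁺. -/
open MeasureTheory Filter

/-!
The profile is self-similar: `u_BP(t^β y, t) = t^{-α} u_BP(y, 1)`, and `β d = α`, so the
substitution `x = t^β y` turns `∫ u_BP(x,t) φ(x) dx` into `∫ u_BP(y,1) φ(t^β y) dy`.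
Since `u_BP(·,1)` is continuous with compact support and `φ` is bounded, dominated convergence
gives the limit `∫ u_BP(y,1) dy · φ(0)` as `t^β → 0`.
-/

open Topology

theorem tendsto_integral_mul_comp_smul {E : Type*} [NormedAddCommGroup E] [NormedSpace ℝ E]
    [MeasurableSpace E] [BorelSpace E] {μ : Measure E} {g φ : E → ℝ}
    (hg : Integrable g μ) (hφc : Continuous φ) (hφb : ∃ B, ∀ x, |φ x| ≤ B) :
    Tendsto (fun s : ℝ => ∫ y, g y * φ (s • y) ∂μ) (𝓝 0) (𝓝 ((∫ y, g y ∂μ) * φ 0)) := by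
  obtain ⟨B, hB⟩ := hφb
  rw [← integral_mul_const]
  refine tendsto_integral_filter_of_dominated_convergence (fun y => ‖g y‖ * B) ?_ ?_
    (hg.norm.mul_const B) ?_
  · exact .of_forall fun s =>
      hg.aestronglyMeasurable.mul (hφc.comp (continuous_const_smul s)).aestronglyMeasurable
  · refine .of_forall fun s => .of_forall fun y => ?_
    rw [norm_mul, Real.norm_eq_abs (φ _)]
    exact mul_le_mul_of_nonneg_left (hB _) (norm_nonneg _)
  · refine .of_forall fun y => tendsto_const_nhds.mul ((hφc.tendsto 0).comp ?_)
    exact (continuous_id.smul continuous_const).tendsto' 0 _ (zero_smul ℝ y)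

namespace Barenblatt

variable {d : ℕ} {m C α β k : ℝ}

theorem uBP_one (y : EuclideanSpace ℝ (Fin d)) :
    uBP d m C α β k y 1 = (max (C - k * ‖y‖ ^ 2) 0) ^ (1 / m) := by
  simp [uBP]

theorem uBP_rpow_smul {t : ℝ} (ht : 0 < t) (y : EuclideanSpace ℝ (Fin d)) :
    uBP d m C α β k (t ^ β • y) t = t ^ (-α) * uBP d m C α β k y 1 := by
  have hcancel : (t ^ β) ^ 2 * t ^ (-(2 * β)) = 1 := by
    rw [← Real.rpow_natCast, ← Real.rpow_mul ht.le, ← Real.rpow_add ht]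
    norm_num [mul_comm β]
  have hnorm : k * ‖t ^ β • y‖ ^ 2 * t ^ (-(2 * β)) = k * ‖y‖ ^ 2 := by
    rw [norm_smul, Real.norm_of_nonneg (Real.rpow_nonneg ht.le β), mul_pow]
    linear_combination k * ‖y‖ ^ 2 * hcancel
  rw [uBP, hnorm, uBP_one]

theorem integral_uBP_mul_eq (hβα : β * d = α) {t : ℝ} (ht : 0 < t)
    (φ : EuclideanSpace ℝ (Fin d) → ℝ) :
    ∫ x, uBP d m C α β k x t * φ x = ∫ y, uBP d m C α β k y 1 * φ (t ^ β • y) := by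
  have hjac : (t ^ β) ^ d * t ^ (-α) = 1 := by
    rw [← Real.rpow_natCast, ← Real.rpow_mul ht.le, hβα, ← Real.rpow_add ht]
    simp
  have hsubst := Measure.integral_comp_smul_of_nonneg volume
    (fun x => uBP d m C α β k x t * φ x) (t ^ β) (hR := Real.rpow_nonneg ht.le β)
  simp only [uBP_rpow_smul ht, finrank_euclideanSpace_fin, smul_eq_mul, mul_assoc,
    integral_const_mul] at hsubst
  rw [eq_inv_mul_iff_mul_eq₀ (by positivity), ← mul_assoc, hjac, one_mul] at hsubst
  exact hsubst.symm

theorem continuous_uBP_one (hm : 0 ≤ m) : Continuous fun y => uBP d m C α β k y 1 := by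
  simp only [uBP_one]
  exact (by fun_prop : Continuous fun y : EuclideanSpace ℝ (Fin d) => max (C - k * ‖y‖ ^ 2) 0)
    |>.rpow_const fun _ => Or.inr (by positivity)

theorem hasCompactSupport_uBP_one (hm : 0 < m) (hk : 0 < k) :
    HasCompactSupport fun y => uBP d m C α β k y 1 := by
  refine .intro (isCompact_closedBall 0 (Real.sqrt (C / k))) fun y hy => ?_
  rw [Metric.mem_closedBall, dist_zero_right, not_le] at hy
  have hCk : C < k * ‖y‖ ^ 2 := by
    rwa [← div_lt_iff₀' hk, ← Real.sqrt_lt' ((Real.sqrt_nonneg _).trans_lt hy)]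
  rw [uBP_one, max_eq_right (by linarith), Real.zero_rpow (by positivity)]

theorem integrable_uBP_one (hm : 0 < m) (hk : 0 < k) :
    Integrable fun y => uBP d m C α β k y 1 :=
  (continuous_uBP_one hm.le).integrable_of_hasCompactSupport (hasCompactSupport_uBP_one hm hk)

end Barenblatt

open Barenblatt in
theorem barenblatt_initial_dirac_general
    (d : ℕ) (hd : 1 ≤ d) (m κ C α β k M : ℝ)
    (hm : 0 < m) (hκ : 0 < κ)
    (hα : α = d / (m * d + 2)) (hβ : β = α / d) (hk : k = m * α / (2 * κ * d))
    (hM : M = ∫ x : EuclideanSpace ℝ (Fin d), uBP d m C α β k x 1)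
    (φ : EuclideanSpace ℝ (Fin d) → ℝ)
    (hφc : Continuous φ) (hφb : ∃ B : ℝ, ∀ x, |φ x| ≤ B) :
    Tendsto (fun t : ℝ => ∫ x : EuclideanSpace ℝ (Fin d), uBP d m C α β k x t * φ x)
      (nhdsWithin 0 (Set.Ioi 0)) (nhds (M * φ 0)) := by
  have hd0 : (0 : ℝ) < d := by exact_mod_cast hd
  have hα0 : 0 < α := by rw [hα]; positivity
  have hβ0 : 0 < β := by rw [hβ]; positivity
  have hk0 : 0 < k := by rw [hk]; positivity
  have hβα : β * d = α := by rw [hβ]; field_simp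
  have hrpow : Tendsto (fun t : ℝ => t ^ β) (𝓝[>] 0) (𝓝 0) :=
    ((Real.continuous_rpow_const hβ0.le).tendsto' 0 0 (Real.zero_rpow hβ0.ne')).mono_left
      nhdsWithin_le_nhds
  rw [hM]
  refine ((tendsto_integral_mul_comp_smul (integrable_uBP_one hm hk0) hφc hφb).comp
    hrpow).congr' ?_
  filter_upwards [self_mem_nhdsWithin] with t ht
  exact (integral_uBP_mul_eq hβα ht φ).symm

/-- The Barenblatt–Pattle solution has a Dirac mass of size `M = ∫ u_BP(·,1)` at the
origin as initial datum: integrated against any bounded continuous test function `φ`,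
it converges to `M · φ(0)` as `t → 0⁺`. -/
theorem barenblatt_initial_dirac
    (d : ℕ) (hd : 1 ≤ d) (m κ C α β k M : ℝ)
    (hm : 0 < m) (hκ : 0 < κ) (hC : 0 < C)
    (hα : α = d / (m * d + 2)) (hβ : β = α / d) (hk : k = m * α / (2 * κ * d))
    (hM : M = ∫ x : EuclideanSpace ℝ (Fin d), uBP d m C α β k x 1)
    (φ : EuclideanSpace ℝ (Fin d) → ℝ)
    (hφc : Continuous φ) (hφb : ∃ B : ℝ, ∀ x, |φ x| ≤ B) :
    Tendsto (fun t : ℝ => ∫ x : EuclideanSpace ℝ (Fin d), uBP d m C α β k x t * φ x)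
      (nhdsWithin 0 (Set.Ioi 0)) (nhds (M * φ 0)) :=
  barenblatt_initial_dirac_general d hd m κ C α β k M hm hκ hα hβ hk hM φ hφc hφb
end
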